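/- arXiv:2605.12288 — 2 statements merged into one kernel-verified Lean document; each statement's English description precedes it below -/
import Mathlib

section
/- Let π_ref, π* be positive distributions on a finite set A satisfying π*(a) = π_ref(a)exp(Q(a)/β)/Z with β > 0. Then for every a, Q(a) - E_{a'∼π_ref}[Q(a')] = β log(π*(a)/π_ref(a)) + β·D_KL(π_ref ‖ π*), where D_KL(π_ref‖π*) = Σ_a π_ref(a) log(π_ref(a)/π*(a)). -/
/-!
If `π* = π_ref · exp (Q / β) / Z`, then `log (π* a / π_ref a) = Q a / β - log Z` for every `a`.
Averaging the negative of this over `π_ref` gives `D_KL(π_ref ‖ π*) = log Z - E_{π_ref}[Q] / β`,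
and adding the two identities eliminates the unknown normalizer `log Z`.
-/

open Finset Real

theorem log_div_eq_sub_log_of_eq_mul_exp_div {p q f Z : ℝ} (hq0 : q ≠ 0)
    (hq : q = p * exp f / Z) : log (q / p) = f - log Z := by
  have hZ : Z ≠ 0 := by rintro rfl; simp [hq] at hq0
  have hp : p ≠ 0 := by rintro rfl; simp [hq] at hq0
  rw [hq, mul_div_assoc, mul_div_cancel_left₀ _ hp, log_div (exp_ne_zero f) hZ, log_exp]

section GibbsTilt

variable {A : Type*} [Fintype A] {p q f : A → ℝ} {Z : ℝ}

theorem sum_mul_log_div_eq_log_sub_sum_mul_of_eq_mul_exp_div (hp : ∑ a, p a = 1)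
    (hq0 : ∀ a, q a ≠ 0) (hq : ∀ a, q a = p a * exp (f a) / Z) :
    ∑ a, p a * log (p a / q a) = log Z - ∑ a, p a * f a := by
  have hlog (a : A) : log (p a / q a) = log Z - f a := by
    rw [← inv_div, log_inv, log_div_eq_sub_log_of_eq_mul_exp_div (hq0 a) (hq a), neg_sub]
  simp only [hlog, mul_sub, sum_sub_distrib, ← sum_mul, hp, one_mul]

theorem sub_sum_mul_eq_log_div_add_sum_mul_log_div_of_eq_mul_exp_div (hp : ∑ a, p a = 1)
    (hq0 : ∀ a, q a ≠ 0) (hq : ∀ a, q a = p a * exp (f a) / Z) (a : A) :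
    f a - ∑ a', p a' * f a' = log (q a / p a) + ∑ a', p a' * log (p a' / q a') := by
  rw [sum_mul_log_div_eq_log_sub_sum_mul_of_eq_mul_exp_div hp hq0 hq,
    log_div_eq_sub_log_of_eq_mul_exp_div (hq0 a) (hq a)]
  ring

end GibbsTilt

theorem tdpo_advantage_identity_general
    {A : Type*} [Fintype A]
    (πref πstar : A → ℝ) (Q : A → ℝ) (β : ℝ) (hβ : 0 < β)
    (hstar_pos : ∀ a, 0 < πstar a)
    (href_sum : ∑ a, πref a = 1)
    (Z : ℝ)
    (hstar : ∀ a, πstar a = πref a * Real.exp (Q a / β) / Z) :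
    ∀ a, Q a - (∑ a', πref a' * Q a') =
      β * Real.log (πstar a / πref a) +
        β * ∑ a', πref a' * Real.log (πref a' / πstar a') := by
  intro a
  have hscaled := sub_sum_mul_eq_log_div_add_sum_mul_log_div_of_eq_mul_exp_div href_sum
    (fun a' => (hstar_pos a').ne') hstar a
  rw [← mul_add, ← hscaled, mul_sub, mul_sum]
  congr 1
  · field_simp
  · refine sum_congr rfl fun a' _ => ?_
    field_simp

theorem tdpo_advantage_identity
    {A : Type*} [Fintype A]
    (πref πstar : A → ℝ) (Q : A → ℝ) (β : ℝ) (hβ : 0 < β)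
    (href_pos : ∀ a, 0 < πref a) (hstar_pos : ∀ a, 0 < πstar a)
    (href_sum : ∑ a, πref a = 1) (hstar_sum : ∑ a, πstar a = 1)
    (Z : ℝ) (hZ : Z = ∑ a, πref a * Real.exp (Q a / β))
    (hstar : ∀ a, πstar a = πref a * Real.exp (Q a / β) / Z) :
    ∀ a, Q a - (∑ a', πref a' * Q a') =
      β * Real.log (πstar a / πref a) +
        β * ∑ a', πref a' * Real.log (πref a' / πstar a') :=
  tdpo_advantage_identity_general πref πstar Q β hβ hstar_pos href_sum Z hstar
end

section
/- Suppose the token-level Bradley–Terry preference probability is p(w ≻ l) = σ(Q_w - Q_l), where Q_w = β log(π*(y_w|s_w)/π_ref(y_w|s_w)) + β log Z_w and Q_l = β log(π*(y_l|s_l)/π_ref(y_l|s_l)) + β log Z_l for some β > 0, positive probabilities, and positive partition constants Z_w, Z_l. Then π*(y_w|s_w)/π*(y_l|s_l) = (π_ref(y_w|s_w)/π_ref(y_l|s_l)) · (p(w ≻ l)/p(w ≺ l))^{1/β} · (Z_l/Z_w). -/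
noncomputable def sigmoid (u : ℝ) : ℝ := 1 / (1 + Real.exp (-u))

theorem tbpo_q_ratio_identity
    (πstar_w πstar_l πref_w πref_l β Zw Zl p Qw Ql : ℝ)
    (hβ : 0 < β) (hZw : 0 < Zw) (hZl : 0 < Zl)
    (hsw : πstar_w ∈ Set.Ioc (0 : ℝ) 1) (hsl : πstar_l ∈ Set.Ioc (0 : ℝ) 1)
    (hrw : πref_w ∈ Set.Ioc (0 : ℝ) 1) (hrl : πref_l ∈ Set.Ioc (0 : ℝ) 1)
    (hQw : Qw = β * Real.log (πstar_w / πref_w) + β * Real.log Zw)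
    (hQl : Ql = β * Real.log (πstar_l / πref_l) + β * Real.log Zl)
    (hp : p = sigmoid (Qw - Ql)) :
    πstar_w / πstar_l =
      (πref_w / πref_l) * (p / (1 - p)) ^ (1 / β) * (Zl / Zw) := by
  obtain ⟨hsw0, _⟩ := hsw
  obtain ⟨hsl0, _⟩ := hsl
  obtain ⟨hrw0, _⟩ := hrw
  obtain ⟨hrl0, _⟩ := hrl
  set u := Qw - Ql with hu
  have hden : 0 < 1 + Real.exp (-u) := by positivity
  have hodds : p / (1 - p) = Real.exp u := by
    rw [hp]
    unfold sigmoid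
    have h1 : 1 - 1 / (1 + Real.exp (-u)) = Real.exp (-u) / (1 + Real.exp (-u)) := by
      field_simp
      ring
    rw [h1]
    rw [div_div_div_cancel_right₀, one_div, ← Real.exp_neg, neg_neg]
    exact hden.ne'
  have hexp : (Real.exp u) ^ (1 / β) = Real.exp (u * (1 / β)) := by
    rw [← Real.exp_one_rpow u, ← Real.rpow_mul (Real.exp_pos 1).le, Real.exp_one_rpow]
  have hmul : u * (1 / β) =
      (Real.log (πstar_w / πref_w) + Real.log Zw) -
      (Real.log (πstar_l / πref_l) + Real.log Zl) := by
    rw [hu, hQw, hQl]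
    field_simp
  have hval : Real.exp (u * (1 / β)) = (πstar_w / πref_w * Zw) / (πstar_l / πref_l * Zl) := by
    rw [hmul, Real.exp_sub, Real.exp_add, Real.exp_add,
      Real.exp_log (by positivity), Real.exp_log hZw,
      Real.exp_log (by positivity), Real.exp_log hZl]
  rw [hodds, hexp, hval]
  field_simp
end
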